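/- Let v₁ = (1/√3)·(1,1,1), v₂ = (1/√2)·(−1,0,1), v₃ = (1/√6)·(1,−2,1) in ℝ³, let V be the 3×3 matrix with columns v₁, v₂, v₃, let R be the 3×3 matrix with rows (0,0,0), (0,−1,−1), (0,1,−1), and let A = V R Vᵀ. Then there exists t₀ ≥ 0 such that for all t ≥ t₀ every entry of exp(tA) is strictly positive. -/

import Mathlib

/-!
`V` is orthogonal, so `exp (t • A) = V * exp (t • R) * Vᵀ`. The map `ℝ × ℂ → M₃(ℝ)` sending
`(a, z)` to the block diagonal matrix with blocks `a` and multiplication by `z` is a continuous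
algebra homomorphism, hence commutes with `exp`; as `R` is the image of `(0, -1 + i)`,
`exp (t • R)` is the image of `(1, e^{t(-1+i)})`. Conjugated by `V`, the image of `(1, z)` is
`J/3 + Re z • (I - J/3) + Im z • K/√3` with `J` the all-ones matrix and `K` skew with entries
`0, ±1`, which is entrywise positive as soon as `‖z‖ ≤ 1/6`, i.e. for `t ≥ log 6`.
-/

open NormedSpace Filter Matrix

noncomputable def exVecV : Matrix (Fin 3) (Fin 3) ℝ :=
  !![1 / Real.sqrt 3, -1 / Real.sqrt 2,  1 / Real.sqrt 6;
     1 / Real.sqrt 3,  0,               -2 / Real.sqrt 6;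
     1 / Real.sqrt 3,  1 / Real.sqrt 2,  1 / Real.sqrt 6]

def exMatR : Matrix (Fin 3) (Fin 3) ℝ :=
  !![0,  0,  0;
     0, -1, -1;
     0,  1, -1]

theorem Matrix.exp_conj_of_mul_eq_one {m 𝔸 : Type*} [Fintype m] [DecidableEq m]
    [NormedCommRing 𝔸] [NormedAlgebra ℚ 𝔸] [CompleteSpace 𝔸] {U V : Matrix m m 𝔸}
    (h : U * V = 1) (A : Matrix m m 𝔸) : exp (U * A * V) = U * exp A * V := by
  simpa only [inv_eq_right_inv h] using
    exp_conj U A ((isUnit_iff_isUnit_det U).2 (isUnit_det_of_right_inverse h))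

noncomputable def realComplexBlock : ℝ × ℂ →ₐ[ℝ] Matrix (Fin 3) (Fin 3) ℝ where
  toFun p := !![p.1, 0, 0; 0, p.2.re, -p.2.im; 0, p.2.im, p.2.re]
  map_one' := by ext i j; fin_cases i <;> fin_cases j <;> simp
  map_mul' p q := by
    ext i j
    fin_cases i <;> fin_cases j <;> simp [Matrix.mul_apply, Fin.sum_univ_three] <;> ring
  map_zero' := by ext i j; fin_cases i <;> fin_cases j <;> simp
  map_add' p q := by ext i j; fin_cases i <;> fin_cases j <;> simp [add_comm]
  commutes' r := by ext i j; fin_cases i <;> fin_cases j <;> simp [Matrix.algebraMap_matrix_apply]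

theorem realComplexBlock_apply (a : ℝ) (z : ℂ) :
    realComplexBlock (a, z) = !![a, 0, 0; 0, z.re, -z.im; 0, z.im, z.re] := rfl

theorem continuous_realComplexBlock : Continuous realComplexBlock := by
  refine continuous_matrix fun i j => ?_
  fin_cases i <;> fin_cases j <;> simp [realComplexBlock] <;> fun_prop

theorem exp_realComplexBlock (a : ℝ) (z : ℂ) :
    exp (realComplexBlock (a, z)) = realComplexBlock (Real.exp a, Complex.exp z) := by
  have hprod : exp (a, z) = (Real.exp a, Complex.exp z) := by
    ext
    · rw [Prod.fst_exp, Real.exp_eq_exp_ℝ]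
    · rw [Prod.snd_exp, Complex.exp_eq_exp_ℂ]
  open scoped Norms.Operator in
  exact hprod ▸ (map_exp realComplexBlock continuous_realComplexBlock (a, z)).symm

theorem exMatR_eq : exMatR = realComplexBlock (0, -1 + Complex.I) := by
  ext i j; fin_cases i <;> fin_cases j <;> simp [exMatR, realComplexBlock_apply]

theorem exp_smul_exMatR (t : ℝ) :
    exp (t • exMatR) = realComplexBlock (1, Complex.exp (t * (-1 + Complex.I))) := by
  rw [exMatR_eq, ← map_smul, Prod.smul_mk, smul_zero, Complex.real_smul, exp_realComplexBlock,
    Real.exp_zero]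

theorem exVecV_mul_realComplexBlock_mul_transpose (a : ℝ) (z : ℂ) :
    exVecV * realComplexBlock (a, z) * exVecVᵀ =
      !![(a + 2 * z.re) / 3, (a - z.re) / 3 - z.im / √3, (a - z.re) / 3 + z.im / √3;
         (a - z.re) / 3 + z.im / √3, (a + 2 * z.re) / 3, (a - z.re) / 3 - z.im / √3;
         (a - z.re) / 3 - z.im / √3, (a - z.re) / 3 + z.im / √3, (a + 2 * z.re) / 3] := by
  have h2 : √2 ^ 2 = 2 := Real.sq_sqrt (by norm_num)
  have h3 : √3 ^ 2 = 3 := Real.sq_sqrt (by norm_num)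
  have h6 : √6 = √2 * √3 := by rw [← Real.sqrt_mul (by norm_num)]; norm_num
  ext i j
  fin_cases i <;> fin_cases j <;>
    simp [exVecV, realComplexBlock_apply, Matrix.mul_apply, Fin.sum_univ_three, h6] <;>
    field_simp <;> ring_nf <;> simp only [h2, h3] <;> ring

theorem exVecV_mul_transpose : exVecV * exVecVᵀ = 1 := by
  have h := exVecV_mul_realComplexBlock_mul_transpose 1 1
  rw [show ((1 : ℝ), (1 : ℂ)) = 1 from rfl, map_one, mul_one] at h
  rw [h, one_fin_three]
  norm_num

theorem exVecV_mul_realComplexBlock_one_mul_transpose_apply_pos {z : ℂ} (hz : ‖z‖ ≤ 1 / 6)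
    (j k : Fin 3) : 0 < (exVecV * realComplexBlock (1, z) * exVecVᵀ) j k := by
  have hre := abs_le.1 ((Complex.abs_re_le_norm z).trans hz)
  have him : |z.im / √3| ≤ 1 / 6 := by
    rw [abs_div, abs_of_pos (Real.sqrt_pos.2 three_pos)]
    exact (div_le_self (abs_nonneg _) (Real.one_le_sqrt.2 (by norm_num : (1 : ℝ) ≤ 3))).trans
      ((Complex.abs_im_le_norm z).trans hz)
  have him' := abs_le.1 him
  rw [exVecV_mul_realComplexBlock_mul_transpose]
  fin_cases j <;> fin_cases k <;> simp <;> linarith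

/-- For `A = V R Vᵀ` with `V` the orthogonal matrix with columns
`v₁ = (1/√3)(1,1,1)`, `v₂ = (1/√2)(-1,0,1)`, `v₃ = (1/√6)(1,-2,1)` and
`R = !![0,0,0; 0,-1,-1; 0,1,-1]`, there exists `t₀ ≥ 0` such that for all `t ≥ t₀`
every entry of `exp (t • A)` is strictly positive. -/
theorem exp_smul_eventually_entries_pos :
    ∃ t₀ : ℝ, 0 ≤ t₀ ∧ ∀ t : ℝ, t₀ ≤ t →
      ∀ j k : Fin 3, 0 < exp (t • (exVecV * exMatR * exVecVᵀ)) j k := by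
  refine ⟨Real.log 6, Real.log_nonneg (by norm_num), fun t ht j k => ?_⟩
  have hdecay : ‖Complex.exp (t * (-1 + Complex.I))‖ ≤ 1 / 6 := by
    rw [Complex.norm_exp, show (↑t * (-1 + Complex.I)).re = -t by simp]
    calc Real.exp (-t) ≤ Real.exp (-Real.log 6) := Real.exp_le_exp.2 (neg_le_neg ht)
      _ = 1 / 6 := by rw [Real.exp_neg, Real.exp_log (by norm_num), one_div]
  have hconj : t • (exVecV * exMatR * exVecVᵀ) = exVecV * (t • exMatR) * exVecVᵀ := by
    rw [Matrix.mul_smul, Matrix.smul_mul]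
  rw [hconj, exp_conj_of_mul_eq_one exVecV_mul_transpose, exp_smul_exMatR]
  exact exVecV_mul_realComplexBlock_one_mul_transpose_apply_pos hdecay j k
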